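/- Let v ∈ V₁ ⊗ₐ ⋯ ⊗ₐ V_d with dim U_α^min(v) = r_α for all α, and fix bases {u_{i_α}^{(α)}}_{i_α=1}^{r_α} of U_α^min(v). Then there is a unique coefficient tensor C ∈ ℝ^{r₁×⋯×r_d} with v = Σ C_{i₁…i_d} u_{i₁}^{(1)} ⊗ ⋯ ⊗ u_{i_d}^{(d)}, and for each α the α-mode matricization 𝓜_α(C) ∈ ℝ^{r_α × ∏_{β≠α} r_β} has full rank r_α. -/

import Mathlib

open scoped TensorProduct

/-- The subspace of `⨂[K] i, V i` of tensors lying in the tensor product of the subspaces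
`W i ⊆ V i`, i.e. the range of `⨂ (W i).subtype`. -/
noncomputable def restrictedRange {ι : Type*} [Fintype ι] {K : Type*} [Field K]
    {V : ι → Type*} [∀ i, AddCommGroup (V i)] [∀ i, Module K (V i)]
    (W : ∀ i, Submodule K (V i)) : Submodule K (⨂[K] i, V i) :=
  LinearMap.range (PiTensorProduct.map fun i => (W i).subtype)

/-- The `α`-mode matricization of a coefficient tensor `C : (∀ i, Fin (r i)) → K`: rows are
indexed by `Fin (r α)` and columns by the remaining multi-indices. -/
def matricization {d : ℕ} {K : Type*} [Field K] (r : Fin d → ℕ)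
    (C : (∀ i, Fin (r i)) → K) (α : Fin d) :
    Matrix (Fin (r α)) ((j : {j : Fin d // j ≠ α}) → Fin (r j)) K :=
  Matrix.of fun k m =>
    C (fun j => if h : j = α then cast (congrArg (fun t => Fin (r t)) h).symm k
      else m ⟨j, h⟩)

lemma tprod_mem_restrictedRange {ι : Type*} [Fintype ι] {K : Type*} [Field K]
    {V : ι → Type*} [∀ i, AddCommGroup (V i)] [∀ i, Module K (V i)]
    (W : ∀ i, Submodule K (V i)) (x : ∀ i, V i) (h : ∀ i, x i ∈ W i) :
    PiTensorProduct.tprod K x ∈ restrictedRange W := by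
  refine ⟨PiTensorProduct.tprod K (fun i => (⟨x i, h i⟩ : W i)), ?_⟩
  rw [PiTensorProduct.map_tprod]
  rfl

/-- For each linearly independent family `u` spanning a submodule, there is a dual family of
functionals on the ambient space. -/
lemma exists_dual_family {K : Type*} [Field K] {V : Type*} [AddCommGroup V] [Module K V]
    {n : ℕ} (u : Fin n → V) (hind : LinearIndependent K u) :
    ∃ φ : Fin n → (V →ₗ[K] K), ∀ k j, φ k (u j) = if j = k then 1 else 0 := by
  classical
  let p := Submodule.span K (Set.range u)
  let B : Module.Basis (Fin n) K p := Module.Basis.span hind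
  obtain ⟨q, hq⟩ := p.exists_isCompl
  let π := Submodule.linearProjOfIsCompl p q hq
  refine ⟨fun k => (B.coord k) ∘ₗ π, fun k j => ?_⟩
  have h1 : π (u j) = B j := by
    have h2 : π ((B j : V)) = B j := Submodule.linearProjOfIsCompl_apply_left hq (B j)
    rwa [Module.Basis.coe_span_apply] at h2
  simp only [LinearMap.comp_apply, h1, Module.Basis.coord_apply, Module.Basis.repr_self]
  exact Finsupp.single_apply

/-- Let `v ∈ V₁ ⊗ₐ ⋯ ⊗ₐ V_d` with minimal subspaces `Umin α` of dimensions
`r α`, and fix bases `u α : Fin (r α) → V α` of `Umin α`.  Then there is a unique coefficient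
tensor `C ∈ ℝ^{r₁ × ⋯ × r_d}` with `v = Σ C_{i₁…i_d} u_{i₁} ⊗ ⋯ ⊗ u_{i_d}`, and each
`α`-mode matricization of `C` has full rank `r α`. -/
theorem stmt15 {d : ℕ} {V : Fin d → Type*}
    [∀ i, AddCommGroup (V i)] [∀ i, Module ℝ (V i)]
    (v : ⨂[ℝ] i, V i) (r : Fin d → ℕ)
    (Umin : ∀ i, Submodule ℝ (V i))
    (hmem : v ∈ restrictedRange Umin)
    (hmin : ∀ (i : Fin d) (U : Submodule ℝ (V i)),
      v ∈ restrictedRange (Function.update (fun j => (⊤ : Submodule ℝ (V j))) i U) →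
        Umin i ≤ U)
    (u : ∀ i, Fin (r i) → V i)
    (hind : ∀ i, LinearIndependent ℝ (u i))
    (hspan : ∀ i, Submodule.span ℝ (Set.range (u i)) = Umin i) :
    ∃ C : (∀ i, Fin (r i)) → ℝ,
      (v = ∑ m : (∀ i, Fin (r i)),
            C m • PiTensorProduct.tprod ℝ (fun i => u i (m i))) ∧
      (∀ C' : (∀ i, Fin (r i)) → ℝ,
        (v = ∑ m : (∀ i, Fin (r i)),
              C' m • PiTensorProduct.tprod ℝ (fun i => u i (m i))) → C' = C) ∧
      (∀ α : Fin d, (matricization r C α).rank = r α) := by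
  classical
  set t : (∀ i, Fin (r i)) → ⨂[ℝ] i, V i :=
    fun m => PiTensorProduct.tprod ℝ (fun i => u i (m i)) with ht
  -- Existence: `v` lies in the span of the `t m`.
  have hvspan : v ∈ Submodule.span ℝ (Set.range t) := by
    obtain ⟨w, hw⟩ := hmem
    have hle : LinearMap.range (PiTensorProduct.map fun i => (Umin i).subtype) ≤
        Submodule.span ℝ (Set.range t) := by
      rw [PiTensorProduct.map_range_eq_span_tprod, Submodule.span_le]
      rintro x ⟨y, rfl⟩
      have hc : ∀ i, ∃ c : Fin (r i) → ℝ, ∑ k, c k • u i k = ((y i : V i)) := by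
        intro i
        rw [← Submodule.mem_span_range_iff_exists_fun ℝ, hspan i]
        exact (y i).2
      choose c hc using hc
      show (PiTensorProduct.tprod ℝ (fun i => ((y i : V i)))) ∈
        (Submodule.span ℝ (Set.range t) : Set (⨂[ℝ] i, V i))
      have : (PiTensorProduct.tprod ℝ (fun i => ((y i : V i)))) =
          ∑ m : (∀ i, Fin (r i)), (∏ i, c i (m i)) • t m := by
        conv_lhs => rw [show (fun i => ((y i : V i))) = fun i => ∑ k, c i k • u i k from
          funext fun i => (hc i).symm]
        rw [MultilinearMap.map_sum (PiTensorProduct.tprod ℝ) (fun i k => c i k • u i k)]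
        exact Finset.sum_congr rfl fun m _ =>
          MultilinearMap.map_smul_univ (PiTensorProduct.tprod ℝ) (fun i => c i (m i))
            (fun i => u i (m i))
      rw [this]
      exact Submodule.sum_mem _ fun m _ =>
        Submodule.smul_mem _ _ (Submodule.subset_span (Set.mem_range_self m))
    exact hle ⟨w, hw⟩
  obtain ⟨C, hC⟩ := (Submodule.mem_span_range_iff_exists_fun ℝ).mp hvspan
  -- Dual functionals
  choose φ hφ using fun i => exists_dual_family (u i) (hind i)
  let Φ : (∀ i, Fin (r i)) → (⨂[ℝ] i, V i) →ₗ[ℝ] ℝ := fun m =>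
    PiTensorProduct.lift ((MultilinearMap.mkPiAlgebra ℝ (Fin d) ℝ).compLinearMap
      (fun i => φ i (m i)))
  have hΦt : ∀ m m', Φ m (t m') = if m' = m then 1 else 0 := by
    intro m m'
    have : Φ m (t m') = ∏ i, (φ i (m i)) (u i (m' i)) := by
      simp [Φ, ht, PiTensorProduct.lift.tprod]
    rw [this]
    by_cases h : m' = m
    · subst h; simp [hφ]
    · rw [if_neg h]
      obtain ⟨i, hi⟩ := Function.ne_iff.mp h
      exact Finset.prod_eq_zero (Finset.mem_univ i) (by simp [hφ, hi])
  have key : ∀ C' : (∀ i, Fin (r i)) → ℝ,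
      (v = ∑ m : (∀ i, Fin (r i)), C' m • t m) → ∀ m, C' m = Φ m v := by
    intro C' hC' m
    rw [hC', map_sum]
    simp only [map_smul, hΦt, smul_eq_mul, mul_ite, mul_one, mul_zero]
    rw [Finset.sum_ite_eq' Finset.univ m C']
    simp
  refine ⟨C, hC.symm, fun C' hC' => ?_, ?_⟩
  · funext m
    rw [key C' hC' m, key C hC.symm m]
  -- Rank statement
  intro α
  set M := matricization r C α with hMdef
  have h1 : M.rank ≤ r α := le_trans M.rank_le_card_height (by simp)
  -- combine a row index and a column multi-index into a full multi-index
  set comb : Fin (r α) → ((j : {j : Fin d // j ≠ α}) → Fin (r j)) → ∀ i, Fin (r i) :=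
    fun k m' j => if h : j = α then cast (congrArg (fun s => Fin (r s)) h).symm k
      else m' ⟨j, h⟩ with hcomb
  have hcombα : ∀ k m', comb k m' α = k := by
    intro k m'; simp [hcomb]
  have hcombne : ∀ k m' j (h : j ≠ α), comb k m' j = m' ⟨j, h⟩ := by
    intro k m' j h; simp [hcomb, h]
  have hM : ∀ k m', M k m' = C (comb k m') := fun _ _ => rfl
  let e : (Fin (r α) × ∀ j : {j : Fin d // j ≠ α}, Fin (r j)) ≃ (∀ i, Fin (r i)) :=
    { toFun := fun p => comb p.1 p.2
      invFun := fun m => (m α, fun j => m j.1)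
      left_inv := by
        rintro ⟨k, m'⟩
        refine Prod.ext (hcombα k m') (funext fun j => hcombne k m' j.1 j.2)
      right_inv := by
        intro m; funext i
        by_cases h : i = α
        · subst h; exact hcombα _ _
        · exact hcombne _ _ i h }
  -- the "slice" family
  let g : ((j : {j : Fin d // j ≠ α}) → Fin (r j)) → ∀ i, V i :=
    fun m' i => if h : i = α then 0 else u i (m' ⟨i, h⟩)
  have hupdate : ∀ k m', (fun i => u i (comb k m' i)) =
      Function.update (g m') α (u α k) := by
    intro k m'; funext i
    by_cases h : i = α
    · subst h; rw [Function.update_self, hcombα]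
    · rw [Function.update_of_ne h, hcombne k m' i h]
      simp [g, h]
  let w : ((j : {j : Fin d // j ≠ α}) → Fin (r j)) → V α :=
    fun m' => ∑ k, M k m' • u α k
  have hv2 : v = ∑ m', PiTensorProduct.tprod ℝ (Function.update (g m') α (w m')) := by
    rw [← hC]
    rw [← Fintype.sum_equiv e
      (fun p => C (comb p.1 p.2) •
        PiTensorProduct.tprod ℝ (Function.update (g p.2) α (u α p.1)))
      (fun m => C m • t m)
      (fun p => by rw [ht]; simp only [e, Equiv.coe_fn_mk]; rw [hupdate p.1 p.2])]
    rw [Fintype.sum_prod_type, Finset.sum_comm]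
    refine Finset.sum_congr rfl fun m' _ => ?_
    rw [show w m' = ∑ k, M k m' • u α k from rfl,
      MultilinearMap.map_update_sum (PiTensorProduct.tprod ℝ) Finset.univ α
        (fun k => M k m' • u α k) (g m')]
    refine Finset.sum_congr rfl fun k _ => ?_
    rw [MultilinearMap.map_update_smul, hM]
  -- the candidate subspace
  let L : (Fin (r α) → ℝ) →ₗ[ℝ] V α := Fintype.linearCombination ℝ (u α)
  let colsp : Submodule ℝ (Fin (r α) → ℝ) := LinearMap.range M.mulVecLin
  let U : Submodule ℝ (V α) := Submodule.map L colsp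
  have hwU : ∀ m', w m' ∈ U := by
    intro m'
    refine ⟨M.transpose m', ?_, ?_⟩
    · rw [show colsp = LinearMap.range M.mulVecLin from rfl, Matrix.range_mulVecLin]
      exact Submodule.subset_span (Set.mem_range_self m')
    · rw [Fintype.linearCombination_apply]
      rfl
  have hvmem : v ∈ restrictedRange (Function.update (fun j => (⊤ : Submodule ℝ (V j))) α U) := by
    rw [hv2]
    refine Submodule.sum_mem _ fun m' _ => ?_
    refine tprod_mem_restrictedRange _ _ fun i => ?_
    by_cases h : i = α
    · subst h
      rw [Function.update_self, Function.update_self]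
      exact hwU m'
    · rw [Function.update_of_ne h, Function.update_of_ne h]
      exact Submodule.mem_top
  have hle : Umin α ≤ U := hmin α U hvmem
  haveI : Module.Finite ℝ colsp := inferInstance
  haveI : Module.Finite ℝ U := Module.Finite.map colsp L
  have h2 : r α ≤ M.rank := by
    have hfr : Module.finrank ℝ (Umin α) = r α := by
      rw [← hspan α, finrank_span_eq_card (hind α), Fintype.card_fin]
    calc r α = Module.finrank ℝ (Umin α) := hfr.symm
      _ ≤ Module.finrank ℝ U := Submodule.finrank_mono hle
      _ ≤ Module.finrank ℝ colsp := Submodule.finrank_map_le L colsp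
      _ = M.rank := rfl
  exact le_antisymm h1 h2
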